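/- For every real β > 1 and every real x ≥ 1, ∑_{a ≤ x} μ(a) = ∫_{𝕋^ω} ∑_{a ≤ x} (∑_{n=1}^∞ (an)^{−β} t^{α(an)})^{-1} dt, where the outer sums run over positive integers a ≤ x. -/

import Mathlib

/-! For fixed `t` the coefficients `n ↦ t^{α(n)}` are completely multiplicative of modulus one.
Hence the `a`-th inner series is `a^{-β} t^{α(a)} F_t(β)` with `F_t(β) = ∑ n^{-β} t^{α(n)}`, and
`F_t(β)⁻¹ = ∑ μ(m) m^{-β} t^{α(m)}` is the Dirichlet inverse series. So the `a`-th summand is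
`a^β ∑_m μ(m) m^{-β} t^{α(m) - α(a)}`, which converges absolutely uniformly in `t` and may be
integrated termwise. The characters `t ↦ t^{α(m)}` of `𝕋^ω` are pairwise distinct, so by Haar
orthogonality only `m = a` survives, leaving `μ(a)`. -/

open MeasureTheory Filter Finset

noncomputable section

instance : MeasurableSpace Circle := borel Circle
instance : BorelSpace Circle := ⟨rfl⟩

/-- The infinite-dimensional torus `𝕋^ω`, a countable product of unit circles. -/
abbrev Torus : Type := ℕ → Circle

/-- `pprime j` is the `j`-th prime (`0`-indexed, so `pprime 0 = 2`). -/
def pprime (j : ℕ) : ℕ := Nat.nth Nat.Prime j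

/-- `expOf n j` is `α_j(n)`, the exponent of the `j`-th prime in the factorization of `n`. -/
def expOf (n j : ℕ) : ℕ := n.factorization (pprime j)

/-- `tpow t n = t^{α(n)} = ∏_j t_j^{α_j(n)}`, a finite product. -/
def tpow (t : Torus) (n : ℕ) : ℂ := ∏ᶠ j, ((t j : ℂ) ^ expOf n j)

lemma expOf_eq_zero_of_lt {n j : ℕ} (h : n < j) : expOf n j = 0 :=
  Nat.factorization_eq_zero_of_lt <|
    h.trans_le (Nat.nth_strictMono Nat.infinite_setOfPred_prime).le_apply

lemma mulSupport_tpow_subset (t : Torus) (n : ℕ) :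
    Function.mulSupport (fun j => (t j : ℂ) ^ expOf n j) ⊆ range (n + 1) := by
  intro j hj
  contrapose! hj
  simp [expOf_eq_zero_of_lt (by simpa using hj)]

lemma tpow_eq_prod (t : Torus) (n : ℕ) :
    tpow t n = ∏ j ∈ range (n + 1), (t j : ℂ) ^ expOf n j :=
  finprod_eq_prod_of_mulSupport_subset _ (mulSupport_tpow_subset t n)

lemma norm_tpow (t : Torus) (n : ℕ) : ‖tpow t n‖ = 1 := by
  simp [tpow_eq_prod, norm_prod, Circle.norm_coe]

lemma tpow_ne_zero (t : Torus) (n : ℕ) : tpow t n ≠ 0 :=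
  norm_ne_zero_iff.mp (by simp [norm_tpow])

lemma tpow_one (t : Torus) : tpow t 1 = 1 := by
  simp [tpow, expOf]

lemma tpow_mul (t : Torus) {m n : ℕ} (hm : m ≠ 0) (hn : n ≠ 0) :
    tpow t (m * n) = tpow t m * tpow t n := by
  simp only [tpow, expOf, Nat.factorization_mul hm hn, Finsupp.add_apply, pow_add]
  exact finprod_mul_distrib ((finite_toSet _).subset (mulSupport_tpow_subset t m))
    ((finite_toSet _).subset (mulSupport_tpow_subset t n))

lemma tpow_mul_left (g t : Torus) (n : ℕ) : tpow (g * t) n = tpow g n * tpow t n := by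
  simp [tpow_eq_prod, ← prod_mul_distrib, mul_pow]

lemma tpow_mulSingle (j n : ℕ) (z : Circle) :
    tpow (Pi.mulSingle j z) n = (z : ℂ) ^ expOf n j := by
  rw [tpow, finprod_eq_single _ j fun i hi => by simp [hi]]
  simp

lemma continuous_tpow (n : ℕ) : Continuous fun t : Torus => tpow t n := by
  simp_rw [tpow_eq_prod]
  fun_prop

lemma exists_expOf_ne {a m : ℕ} (ha : a ≠ 0) (hm : m ≠ 0) (h : a ≠ m) :
    ∃ j, expOf a j ≠ expOf m j := by
  obtain ⟨p, hp⟩ : ∃ p, a.factorization p ≠ m.factorization p := by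
    by_contra! hc
    exact h (Nat.factorization_inj ha hm (Finsupp.ext hc))
  have hprime : p.Prime := by
    by_contra hnp
    simp [Nat.factorization_eq_zero_of_not_prime _ hnp] at hp
  exact ⟨Nat.count Nat.Prime p, by rwa [expOf, expOf, pprime, Nat.nth_count hprime]⟩

lemma Circle.exists_pow_ne_pow {k l : ℕ} (h : k ≠ l) :
    ∃ z : Circle, (z : ℂ) ^ k ≠ (z : ℂ) ^ l := by
  set d : ℤ := k - l
  have hd : (d : ℝ) ≠ 0 := Int.cast_ne_zero.mpr (sub_ne_zero.mpr (by exact_mod_cast h))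
  refine ⟨Circle.exp (Real.pi / d), fun hkl => Circle.exp_pi_ne_one ?_⟩
  have hkl' : Circle.exp (Real.pi / d) ^ k = Circle.exp (Real.pi / d) ^ l := by
    rw [← Circle.coe_inj, Circle.coe_pow, Circle.coe_pow, hkl]
  rw [show Real.pi = d * (Real.pi / d) by field_simp, Circle.exp_intCast_mul, zpow_sub,
    zpow_natCast, zpow_natCast, hkl', mul_inv_cancel]

lemma integral_eq_zero_of_mul_left_eq_smul {G E : Type*} [Group G] [MeasurableSpace G]
    [MeasurableMul G] [NormedAddCommGroup E] [NormedSpace ℂ E] {ν : Measure G}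
    [ν.IsMulLeftInvariant] {f : G → E} (g : G) {c : ℂ} (hc : c ≠ 1)
    (hf : ∀ x, f (g * x) = c • f x) : ∫ x, f x ∂ν = 0 := by
  have h := integral_mul_left_eq_self (μ := ν) f g
  simp only [hf, integral_smul] at h
  have h' : (c - 1) • ∫ x, f x ∂ν = 0 := by rw [sub_smul, h, one_smul, sub_self]
  exact (smul_eq_zero.mp h').resolve_left (sub_ne_zero.mpr hc)

lemma integral_inv_tpow_mul_tpow (ν : Measure Torus) [ν.IsMulLeftInvariant]
    [IsProbabilityMeasure ν] {a m : ℕ} (ha : a ≠ 0) (hm : m ≠ 0) :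
    ∫ t, (tpow t a)⁻¹ * tpow t m ∂ν = if m = a then 1 else 0 := by
  split_ifs with h
  · simp [h, tpow_ne_zero]
  obtain ⟨j, hj⟩ := exists_expOf_ne ha hm (Ne.symm h)
  obtain ⟨z, hz⟩ := Circle.exists_pow_ne_pow hj
  -- translating the `j`-th coordinate by `z` multiplies the integrand by `z^{α_j(m) - α_j(a)} ≠ 1`
  have hz0 : (z : ℂ) ^ expOf a j ≠ 0 := pow_ne_zero _ (Circle.coe_ne_zero z)
  refine integral_eq_zero_of_mul_left_eq_smul (Pi.mulSingle j z)
    (c := ((z : ℂ) ^ expOf a j)⁻¹ * (z : ℂ) ^ expOf m j)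
    (fun h1 => hz ((inv_mul_eq_one₀ hz0).mp h1)) fun t => ?_
  simp only [tpow_mul_left, tpow_mulSingle, smul_eq_mul, mul_inv]
  ring

open scoped LSeries.notation ArithmeticFunction.Moebius

namespace LSeries

lemma term_mul_left_eq (f g : ℕ → ℂ) (s : ℂ) (n : ℕ) : term (f * g) s n = f n * term g s n := by
  rcases eq_or_ne n 0 with rfl | hn
  · simp
  · simp [term_of_ne_zero hn, mul_div_assoc]

lemma term_ofReal_eq {m : ℕ} (hm : m ≠ 0) (f : ℕ → ℂ) (β : ℝ) :
    term f β m = ((m : ℝ) ^ (-β) : ℝ) * f m := by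
  rw [term_of_ne_zero hm, Complex.ofReal_cpow (Nat.cast_nonneg m), Complex.ofReal_neg,
    Complex.cpow_neg, Complex.ofReal_natCast, div_eq_inv_mul]

lemma tsum_term_succ (f : ℕ → ℂ) (s : ℂ) : ∑' n, term f s (n + 1) = LSeries f s :=
  (add_left_injective 1).tsum_eq fun n hn =>
    ⟨n - 1, Nat.sub_add_cancel <| Nat.one_le_iff_ne_zero.mpr fun h => hn (by simp [h])⟩

variable {f : ℕ → ℂ}

lemma term_mul_of_mul (hf : ∀ {m n : ℕ}, m ≠ 0 → n ≠ 0 → f (m * n) = f m * f n) (s : ℂ)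
    (m n : ℕ) : term f s (m * n) = term f s m * term f s n := by
  rcases eq_or_ne m 0 with rfl | hm
  · simp
  rcases eq_or_ne n 0 with rfl | hn
  · simp
  simp only [term_of_ne_zero (mul_ne_zero hm hn), term_of_ne_zero hm, term_of_ne_zero hn, hf hm hn,
    Nat.cast_mul, Complex.natCast_mul_natCast_cpow, div_mul_div_comm]

lemma tsum_term_mul_succ (hf : ∀ {m n : ℕ}, m ≠ 0 → n ≠ 0 → f (m * n) = f m * f n) (s : ℂ)
    (m : ℕ) : ∑' n, term f s (m * (n + 1)) = term f s m * LSeries f s := by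
  simp_rw [term_mul_of_mul hf, tsum_mul_left, tsum_term_succ]

lemma mul_convolution_mul_of_mul (hf : ∀ {m n : ℕ}, m ≠ 0 → n ≠ 0 → f (m * n) = f m * f n)
    (u v : ℕ → ℂ) : (f * u) ⍟ (f * v) = f * (u ⍟ v) := by
  ext n
  simp only [convolution_def, Pi.mul_apply, Finset.mul_sum]
  refine Finset.sum_congr rfl fun p hp => ?_
  obtain ⟨hp1, hp2⟩ := Nat.ne_zero_of_mem_divisorsAntidiagonal hp
  rw [← (Nat.mem_divisorsAntidiagonal.mp hp).1, hf hp1 hp2]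
  ring

lemma convolution_mul_moebius_of_mul (h1 : f 1 = 1)
    (hf : ∀ {m n : ℕ}, m ≠ 0 → n ≠ 0 → f (m * n) = f m * f n) : f ⍟ (f * ↗μ) = δ := by
  have h : (1 : ℕ → ℂ) ⍟ ↗μ = δ := by
    rw [one_convolution_eq_zeta_convolution, ← ArithmeticFunction.one_eq_delta]
    simp_rw [← ArithmeticFunction.natCoe_apply, ← ArithmeticFunction.intCoe_apply,
      ArithmeticFunction.coe_mul, ArithmeticFunction.coe_zeta_mul_coe_moebius]
  nth_rewrite 1 [← mul_one f]
  rw [mul_convolution_mul_of_mul hf, h, mul_delta h1]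

end LSeries

open LSeries

lemma LSeries_mul_LSeries_mul_moebius {f : ℕ → ℂ} (h1 : f 1 = 1)
    (hf : ∀ {m n : ℕ}, m ≠ 0 → n ≠ 0 → f (m * n) = f m * f n) {s : ℂ}
    (hfs : LSeriesSummable f s) (hfμ : LSeriesSummable (f * ↗μ) s) :
    LSeries f s * LSeries (f * ↗μ) s = 1 := by
  rw [← LSeries_convolution' hfs hfμ, convolution_mul_moebius_of_mul h1 hf, LSeries_delta,
    Pi.one_apply]

lemma norm_term_tpow_mul (t : Torus) (g : ℕ → ℂ) (s : ℂ) (n : ℕ) :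
    ‖term (tpow t * g) s n‖ = ‖term g s n‖ := by
  rw [term_mul_left_eq, norm_mul, norm_tpow, one_mul]

lemma LSeriesSummable_tpow_mul (t : Torus) {g : ℕ → ℂ} {s : ℂ} (hg : LSeriesSummable g s) :
    LSeriesSummable (tpow t * g) s :=
  (hg.norm.congr fun n => (norm_term_tpow_mul t g s n).symm).of_norm

lemma LSeries_tpow_mul_LSeries_tpow_mul_moebius (t : Torus) {s : ℂ} (hs : 1 < s.re) :
    LSeries (tpow t) s * LSeries (tpow t * ↗μ) s = 1 := by
  refine LSeries_mul_LSeries_mul_moebius (tpow_one t) (tpow_mul t) ?_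
    (LSeriesSummable_tpow_mul t (ArithmeticFunction.LSeriesSummable_moebius_iff.mpr hs))
  simpa using LSeriesSummable_tpow_mul t (LSeriesSummable_one_iff.mpr hs)

lemma inv_tsum_tpow_mul_succ (t : Torus) {β : ℝ} (hβ : 1 < β) {a : ℕ} (ha : a ≠ 0) :
    (∑' n : ℕ, Complex.ofReal (((a * (n + 1) : ℕ) : ℝ) ^ (-β)) * tpow t (a * (n + 1)))⁻¹ =
      (a : ℂ) ^ (β : ℂ) * ((tpow t a)⁻¹ * LSeries (tpow t * ↗μ) β) := by
  have hs : 1 < (β : ℂ).re := by simpa using hβ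
  simp_rw [← term_ofReal_eq (mul_ne_zero ha (Nat.succ_ne_zero _)),
    tsum_term_mul_succ (tpow_mul t), mul_inv,
    inv_eq_of_mul_eq_one_right (LSeries_tpow_mul_LSeries_tpow_mul_moebius t hs),
    term_of_ne_zero ha, inv_div, div_eq_mul_inv, mul_assoc]

section Integration

lemma continuous_LSeries_tpow_mul {g : ℕ → ℂ} {s : ℂ} (hg : LSeriesSummable g s) :
    Continuous fun t => LSeries (tpow t * g) s := by
  simp only [LSeries, term_mul_left_eq]
  exact continuous_tsum (fun n => (continuous_tpow n).mul continuous_const) hg.norm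
    fun n t => by rw [norm_mul, norm_tpow, one_mul]

lemma continuous_inv_tpow (a : ℕ) : Continuous fun t : Torus => (tpow t a)⁻¹ :=
  (continuous_tpow a).inv₀ (tpow_ne_zero · a)

variable (ν : Measure Torus)

lemma integral_inv_tpow_mul_LSeries_tpow_mul_moebius [ν.IsMulLeftInvariant]
    [IsProbabilityMeasure ν] {a : ℕ} (ha : a ≠ 0) {s : ℂ} (hs : 1 < s.re) :
    ∫ t, (tpow t a)⁻¹ * LSeries (tpow t * ↗μ) s ∂ν = term ↗μ s a := by
  set F : ℕ → Torus → ℂ := fun n t => term ↗μ s n * ((tpow t a)⁻¹ * tpow t n)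
  have hF : ∀ t, (tpow t a)⁻¹ * LSeries (tpow t * ↗μ) s = ∑' n, F n t := fun t => by
    simp only [F, LSeries, ← tsum_mul_left, term_mul_left_eq]
    exact tsum_congr fun n => by ring
  have hF_int : ∀ n, Integrable (F n) ν := fun n =>
    (continuous_const.mul ((continuous_inv_tpow a).mul
      (continuous_tpow n))).integrable_of_hasCompactSupport (.of_compactSpace _)
  have hF_norm : ∀ n t, ‖F n t‖ = ‖term ↗μ s n‖ := by simp [F, norm_tpow]
  have hF_integral : ∀ n, ∫ t, F n t ∂ν = if n = a then term ↗μ s a else 0 := by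
    intro n
    rcases eq_or_ne n 0 with rfl | hn
    · simp [F, ha.symm]
    rw [integral_const_mul, integral_inv_tpow_mul_tpow ν ha hn]
    split_ifs with h <;> simp [h]
  rw [funext hF, ← integral_tsum_of_summable_integral_norm hF_int
    (by simpa [hF_norm] using (ArithmeticFunction.LSeriesSummable_moebius_iff.mpr hs).norm),
    tsum_congr hF_integral, tsum_ite_eq]

lemma integrable_inv_tsum_tpow_mul_succ [IsFiniteMeasure ν] {β : ℝ} (hβ : 1 < β) {a : ℕ}
    (ha : a ≠ 0) : Integrable (fun t => (∑' n : ℕ,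
      Complex.ofReal (((a * (n + 1) : ℕ) : ℝ) ^ (-β)) * tpow t (a * (n + 1)))⁻¹) ν := by
  simp_rw [inv_tsum_tpow_mul_succ _ hβ ha]
  have hs : 1 < (β : ℂ).re := by simpa using hβ
  exact (continuous_const.mul ((continuous_inv_tpow a).mul (continuous_LSeries_tpow_mul
    (ArithmeticFunction.LSeriesSummable_moebius_iff.mpr hs)))).integrable_of_hasCompactSupport
      (.of_compactSpace _)

lemma integral_inv_tsum_tpow_mul_succ [ν.IsMulLeftInvariant] [IsProbabilityMeasure ν] {β : ℝ}
    (hβ : 1 < β) {a : ℕ} (ha : a ≠ 0) : ∫ t, (∑' n : ℕ,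
      Complex.ofReal (((a * (n + 1) : ℕ) : ℝ) ^ (-β)) * tpow t (a * (n + 1)))⁻¹ ∂ν = μ a := by
  have hs : 1 < (β : ℂ).re := by simpa using hβ
  simp_rw [inv_tsum_tpow_mul_succ _ hβ ha]
  rw [integral_const_mul, integral_inv_tpow_mul_LSeries_tpow_mul_moebius ν ha hs,
    term_of_ne_zero ha, mul_div_cancel₀]
  exact (Complex.cpow_ne_zero_iff_of_exponent_ne_zero
    (by simpa using (zero_lt_one.trans hβ).ne')).mpr (Nat.cast_ne_zero.mpr ha)

end Integration

theorem moebius_partial_sum_integral_general (β : ℝ) (hβ : 1 < β) (x : ℝ)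
    (ν : Measure Torus) [ν.IsHaarMeasure] [IsProbabilityMeasure ν] :
    ((∑ a ∈ Finset.Icc 1 ⌊x⌋₊, ArithmeticFunction.moebius a : ℤ) : ℂ) =
      ∫ t : Torus, ∑ a ∈ Finset.Icc 1 ⌊x⌋₊,
        (∑' n : ℕ,
          Complex.ofReal (((a * (n + 1) : ℕ) : ℝ) ^ (-β)) * tpow t (a * (n + 1)))⁻¹ ∂ν := by
  have ha : ∀ a ∈ Icc 1 ⌊x⌋₊, a ≠ 0 := fun a h => Nat.one_le_iff_ne_zero.mp (mem_Icc.mp h).1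
  rw [integral_finsetSum _ fun a h => integrable_inv_tsum_tpow_mul_succ ν hβ (ha a h), Int.cast_sum]
  exact sum_congr rfl fun a h => (integral_inv_tsum_tpow_mul_succ ν hβ (ha a h)).symm

/-- For every real `β > 1` and every real `x ≥ 1`,
`∑_{a ≤ x} μ(a) = ∫_{𝕋^ω} ∑_{a ≤ x} (∑_{n=1}^∞ (an)^{-β} t^{α(an)})⁻¹ dt`,
where the outer sums run over positive integers `a ≤ x` and `dt` is the normalized Haar
measure on `𝕋^ω`. -/
theorem moebius_partial_sum_integral (β : ℝ) (hβ : 1 < β) (x : ℝ) (hx : 1 ≤ x)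
    (ν : Measure Torus) [ν.IsHaarMeasure] [IsProbabilityMeasure ν] :
    ((∑ a ∈ Finset.Icc 1 ⌊x⌋₊, ArithmeticFunction.moebius a : ℤ) : ℂ) =
      ∫ t : Torus, ∑ a ∈ Finset.Icc 1 ⌊x⌋₊,
        (∑' n : ℕ,
          Complex.ofReal (((a * (n + 1) : ℕ) : ℝ) ^ (-β)) * tpow t (a * (n + 1)))⁻¹ ∂ν :=
  moebius_partial_sum_integral_general β hβ x ν
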